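/- If V₀ is an isotropic linear subspace of ℝ^{2n} and V = τ_p(V₀) = p·(V₀ × {0}) is its left translate by p ∈ ℍⁿ, then the Korányi metric restricted to V is Euclidean in the horizontal coordinates: d(x,y) = |x' − y'| for all x, y ∈ V. -/

import Mathlib

open scoped BigOperators
noncomputable section

abbrev Heis (n : ℕ) := EuclideanSpace ℝ (Fin (2*n)) × ℝ

def symA (n : ℕ) (x y : EuclideanSpace ℝ (Fin (2*n))) : ℝ :=
  ∑ i : Fin n, (x ⟨i.val + n, by have := i.isLt; omega⟩ * y ⟨i.val, by have := i.isLt; omega⟩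
    - x ⟨i.val, by have := i.isLt; omega⟩ * y ⟨i.val + n, by have := i.isLt; omega⟩)

def hMul (n : ℕ) (x y : Heis n) : Heis n :=
  (x.1 + y.1, x.2 + y.2 + 2 * symA n x.1 y.1)

def hInv (n : ℕ) (x : Heis n) : Heis n := (-x.1, -x.2)

def Knorm (n : ℕ) (x : Heis n) : ℝ := (‖x.1‖^4 + x.2^2) ^ ((1:ℝ)/4)

def Kdist (n : ℕ) (x y : Heis n) : ℝ := Knorm n (hMul n (hInv n y) x)

def isotropic (n : ℕ) (W : Submodule ℝ (EuclideanSpace ℝ (Fin (2*n)))) : Prop :=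
  ∀ x ∈ W, ∀ y ∈ W, symA n x y = 0

def plane (n : ℕ) (p : Heis n) (W : Submodule ℝ (EuclideanSpace ℝ (Fin (2*n)))) : Set (Heis n) :=
  {z | ∃ w ∈ W, z = hMul n p (w, (0:ℝ))}

def projH (n : ℕ) (W : Submodule ℝ (EuclideanSpace ℝ (Fin (2*n)))) (x : Heis n) : Heis n :=
  ((W.orthogonalProjection x.1 : EuclideanSpace ℝ (Fin (2*n))), 0)

def PV (n : ℕ) (p : Heis n) (W : Submodule ℝ (EuclideanSpace ℝ (Fin (2*n)))) (x : Heis n) : Heis n :=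
  hMul n p (projH n W (hMul n (hInv n p) x))

/-!
Left translation preserves `Kdist`, because `(p · y)⁻¹ · (p · x) = y⁻¹ · x`. So it
suffices to treat `p = 0`, where the points are horizontal, `(w, 0)` and `(v, 0)` with `v, w ∈ W`.
Then `(v, 0)⁻¹ · (w, 0) = (w - v, -2 A(v, w))`, and the vertical part vanishes because `W` is isotropic.
-/

section symA

variable {n : ℕ} (x y z : EuclideanSpace ℝ (Fin (2*n)))

theorem symA_add_left : symA n (x + y) z = symA n x z + symA n y z := by
  simp only [symA, PiLp.add_apply, ← Finset.sum_add_distrib]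
  exact Finset.sum_congr rfl fun _ _ => by ring

theorem symA_add_right : symA n x (y + z) = symA n x y + symA n x z := by
  simp only [symA, PiLp.add_apply, ← Finset.sum_add_distrib]
  exact Finset.sum_congr rfl fun _ _ => by ring

theorem symA_neg_left : symA n (-x) y = -symA n x y := by
  simp only [symA, PiLp.neg_apply, ← Finset.sum_neg_distrib]
  exact Finset.sum_congr rfl fun _ _ => by ring

theorem symA_comm : symA n y x = -symA n x y := by
  simp only [symA, ← Finset.sum_neg_distrib]
  exact Finset.sum_congr rfl fun _ _ => by ring

theorem symA_self : symA n x x = 0 := by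
  linarith [symA_comm x x]

end symA

theorem hMul_hInv_hMul_left (n : ℕ) (p x y : Heis n) :
    hMul n (hInv n (hMul n p x)) (hMul n p y) = hMul n (hInv n x) y := by
  simp only [hMul, hInv, neg_add_rev, symA_add_left, symA_add_right, symA_neg_left,
    symA_self, symA_comm x.1 p.1, Prod.mk.injEq]
  constructor
  · abel
  · ring

theorem Kdist_hMul_left (n : ℕ) (p x y : Heis n) :
    Kdist n (hMul n p x) (hMul n p y) = Kdist n x y := by
  rw [Kdist, Kdist, hMul_hInv_hMul_left]

theorem Knorm_horizontal (n : ℕ) (u : EuclideanSpace ℝ (Fin (2*n))) :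
    Knorm n (u, 0) = ‖u‖ := by
  rw [Knorm, zero_pow two_ne_zero, add_zero, one_div]
  exact_mod_cast Real.pow_rpow_inv_natCast (norm_nonneg u) four_ne_zero

theorem Kdist_horizontal (n : ℕ) (v w : EuclideanSpace ℝ (Fin (2*n))) (h : symA n v w = 0) :
    Kdist n (w, 0) (v, 0) = ‖w - v‖ := by
  rw [Kdist, ← Knorm_horizontal]
  congr 1
  simp only [hMul, hInv, symA_neg_left, h, Prod.mk.injEq]
  constructor
  · abel
  · ring

/-- On a left translate of a horizontal homogeneous subgroup, the Korányi metric is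
Euclidean in the horizontal coordinates. -/
theorem stmt4 (n : ℕ) (W : Submodule ℝ (EuclideanSpace ℝ (Fin (2*n))))
    (hW : isotropic n W) (p : Heis n) (x y : Heis n)
    (hx : x ∈ plane n p W) (hy : y ∈ plane n p W) :
    Kdist n x y = ‖x.1 - y.1‖ := by
  obtain ⟨w, hw, rfl⟩ := hx
  obtain ⟨v, hv, rfl⟩ := hy
  rw [Kdist_hMul_left, Kdist_horizontal n v w (hW v hv w hw)]
  simp only [hMul, add_sub_add_left_eq_sub]
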